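/- Let I = {j} consist of a single modified vertex and J = S \ {s_j}. Then the total number of chips in the unique final configuration of the Modified Kostant Game with active set {j} equals the sum, over all positive coroots γ^∨ of Φ that do not lie in the coroot subsystem generated by {α_i^∨ : i ≠ j}, of the coefficient of α_j^∨ in the expansion of γ^∨ in simple coroots. -/

import Mathlib

open scoped Classical RealInnerProductSpace

noncomputable section

variable {n d : ℕ}

/-- The pairing `⟨β, γ^∨⟩ = 2(β,γ)/(γ,γ)` of a vector with a coroot. -/
def rsPair (β γ : EuclideanSpace ℝ (Fin d)) : ℝ := 2 * ⟪β, γ⟫ / ⟪γ, γ⟫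

/-- The coroot `γ^∨ = 2γ/(γ,γ)`. -/
def rsCoroot (γ : EuclideanSpace ℝ (Fin d)) : EuclideanSpace ℝ (Fin d) :=
  (2 / ⟪γ, γ⟫) • γ

/-- `⟨·, γ^∨⟩` as a linear functional. -/
def corootForm (γ : EuclideanSpace ℝ (Fin d)) : EuclideanSpace ℝ (Fin d) →ₗ[ℝ] ℝ where
  toFun x := 2 * ⟪x, γ⟫ / ⟪γ, γ⟫
  map_add' x y := by simp only [inner_add_left]; ring
  map_smul' c x := by simp only [real_inner_smul_left, RingHom.id_apply, smul_eq_mul]; ring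

/-- A finite reduced crystallographic root system in the Euclidean space `ℝ^d`, together with a
chosen base of simple roots `α 0, …, α (n-1)`: every root is an integral linear combination of
the simple roots with all coefficients nonnegative or all nonpositive. -/
structure RootSystemBase (n d : ℕ) : Type where
  Φ : Finset (EuclideanSpace ℝ (Fin d))
  α : Fin n → EuclideanSpace ℝ (Fin d)
  α_mem : ∀ i, α i ∈ Φ
  nonzero : ∀ β ∈ Φ, β ≠ 0
  reduced : ∀ β ∈ Φ, ∀ t : ℝ, t • β ∈ Φ → t = 1 ∨ t = -1
  crystallographic : ∀ β ∈ Φ, ∀ γ ∈ Φ, ∃ k : ℤ, rsPair β γ = (k : ℝ)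
  reflClosed : ∀ β ∈ Φ, ∀ γ ∈ Φ, β - rsPair β γ • γ ∈ Φ
  indep : LinearIndependent ℝ α
  base : ∀ β ∈ Φ, ∃ c : Fin n → ℤ,
    β = ∑ i, (c i : ℝ) • α i ∧ ((∀ i, 0 ≤ c i) ∨ (∀ i, c i ≤ 0))

/-- The extended space `E' = E ⊕ ℝ^I`. -/
abbrev ExtSp (n d : ℕ) (I : Finset (Fin n)) : Type :=
  EuclideanSpace ℝ (Fin d) × ({p : Fin n // p ∈ I} → ℝ)

/-- The total source vector `β = ∑_{p ∈ I} β_p` in the extended space. -/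
def betaVec (n d : ℕ) (I : Finset (Fin n)) : ExtSp n d I := (0, fun _ => 1)

namespace RootSystemBase

variable (R : RootSystemBase n d)

lemma alpha_ne_zero (i : Fin n) : R.α i ≠ 0 := R.nonzero _ (R.α_mem i)

lemma inner_alpha_ne_zero (i : Fin n) : ⟪R.α i, R.α i⟫ ≠ 0 := fun h =>
  R.alpha_ne_zero i ((inner_self_eq_zero (𝕜 := ℝ)).mp h)

lemma corootForm_alpha_self (i : Fin n) : corootForm (R.α i) (R.α i) = 2 := by
  have h2 := R.inner_alpha_ne_zero i
  show 2 * ⟪R.α i, R.α i⟫ / ⟪R.α i, R.α i⟫ = 2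
  rw [mul_div_assoc, div_self h2, mul_one]

/-- The simple reflection `s_i : x ↦ x - ⟨x, α_i^∨⟩ α_i` as a linear automorphism of `E`. -/
def sRefl (i : Fin n) :
    EuclideanSpace ℝ (Fin d) ≃ₗ[ℝ] EuclideanSpace ℝ (Fin d) :=
  Module.reflection (R.corootForm_alpha_self i)

/-- The Weyl group `W`, as the subgroup of linear automorphisms of `E` generated by the
simple reflections. -/
def weyl : Subgroup (EuclideanSpace ℝ (Fin d) ≃ₗ[ℝ] EuclideanSpace ℝ (Fin d)) :=
  Subgroup.closure (Set.range R.sRefl)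

/-- `wordProd [i₁, …, i_t] = s_{i₁} ⋯ s_{i_t}`. -/
def wordProd (l : List (Fin n)) :
    EuclideanSpace ℝ (Fin d) ≃ₗ[ℝ] EuclideanSpace ℝ (Fin d) :=
  (l.map R.sRefl).prod

/-- The Weyl group element `s_{i_t} ⋯ s_{i_1}` associated to the firing sequence
`(i_1, …, i_t)`. -/
def seqProd (l : List (Fin n)) :
    EuclideanSpace ℝ (Fin d) ≃ₗ[ℝ] EuclideanSpace ℝ (Fin d) :=
  (l.reverse.map R.sRefl).prod

/-- The length function `ℓ` of the Coxeter system `(W, S)`: the minimal number of simple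
reflections needed to express `w`. -/
def len (w : EuclideanSpace ℝ (Fin d) ≃ₗ[ℝ] EuclideanSpace ℝ (Fin d)) : ℕ :=
  sInf {t | ∃ l : List (Fin n), l.length = t ∧ R.wordProd l = w}

/-- The set `W^J` of minimal length representatives of `W/W_J`, for `J = S \ {s_i : i ∈ I}`:
those `w ∈ W` with `ℓ(w s_j) > ℓ(w)` for all `j ∉ I`. -/
def minReps (I : Finset (Fin n)) :
    Set (EuclideanSpace ℝ (Fin d) ≃ₗ[ℝ] EuclideanSpace ℝ (Fin d)) :=
  {w | w ∈ R.weyl ∧ ∀ j, j ∉ I → R.len w < R.len (w * R.sRefl j)}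

/-- The Cartan matrix `a_{uv} = ⟨α_u, α_v^∨⟩` (an integer by crystallinity). -/
def cartan (u v : Fin n) : ℤ := ⌊rsPair (R.α u) (R.α v)⌋

/-- The set `Φ⁺` of positive roots. -/
def posRoots : Finset (EuclideanSpace ℝ (Fin d)) :=
  R.Φ.filter fun β => ∃ c : Fin n → ℤ, β = ∑ i, (c i : ℝ) • R.α i ∧ ∀ i, 0 ≤ c i

/-- The set `Φ_P⁺` of positive roots lying in the span of the simple roots `α_j`, `j ∈ P`. -/
def parPos (P : Finset (Fin n)) : Finset (EuclideanSpace ℝ (Fin d)) :=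
  R.posRoots.filter fun β => β ∈ Submodule.span ℝ (R.α '' (P : Set (Fin n)))

/-- `∑_{u ≠ v} (−a_{uv}) c_u + [v ∈ I]`. -/
def chipBound (I : Finset (Fin n)) (c : Fin n → ℤ) (v : Fin n) : ℤ :=
  (∑ u ∈ Finset.univ.erase v, -(R.cartan u v) * c u) + (if v ∈ I then 1 else 0)

/-- Vertex `v` is sad in the configuration `c` (Modified Kostant Game with active set `I`). -/
def Sad (I : Finset (Fin n)) (c : Fin n → ℤ) (v : Fin n) : Prop :=
  2 * c v < R.chipBound I c v

/-- Firing vertex `v`. -/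
def fire (I : Finset (Fin n)) (c : Fin n → ℤ) (v : Fin n) : Fin n → ℤ :=
  Function.update c v (R.chipBound I c v - c v)

end RootSystemBase

/-- `ValidFrom R I c l`: starting from the configuration `c`, the sequence `l` fires a sad
vertex at each step. -/
def RootSystemBase.ValidFrom (R : RootSystemBase n d) (I : Finset (Fin n)) :
    (Fin n → ℤ) → List (Fin n) → Prop
  | _, [] => True
  | c, v :: l => R.Sad I c v ∧ RootSystemBase.ValidFrom R I (R.fire I c v) l

namespace RootSystemBase

variable (R : RootSystemBase n d)

/-- A valid firing sequence: starts at the zero configuration and fires a sad vertex at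
each step. -/
def Valid (I : Finset (Fin n)) (l : List (Fin n)) : Prop := R.ValidFrom I 0 l

/-- The configuration reached after playing the sequence `l` from the zero configuration. -/
def play (I : Finset (Fin n)) (l : List (Fin n)) : Fin n → ℤ :=
  l.foldl (R.fire I) 0

/-- A maximal valid firing sequence: no vertex is sad in the final configuration. -/
def MaximalSeq (I : Finset (Fin n)) (l : List (Fin n)) : Prop :=
  R.Valid I l ∧ ∀ v, ¬ R.Sad I (R.play I l) v

/-- The (integer) coefficients of a vector in the basis of simple coroots, when they exist. -/
def corootCoeffs (x : EuclideanSpace ℝ (Fin d)) : Fin n → ℤ :=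
  if h : ∃ k : Fin n → ℤ, x = ∑ j, (k j : ℝ) • rsCoroot (R.α j) then h.choose else 0

/-- The `I`-height of a (co)vector: the sum over `j ∈ I` of its coefficients in the basis
of simple coroots. -/
def htI (I : Finset (Fin n)) (x : EuclideanSpace ℝ (Fin d)) : ℤ :=
  ∑ j ∈ I, R.corootCoeffs x j

end RootSystemBase

/-- The extended pairing `⟨·, α_i^∨⟩` on `E' = E ⊕ ℝ^I`, determined by
`⟨β_p, α_i^∨⟩ = −δ_{pi}`, as a linear functional. -/
def extForm (R : RootSystemBase n d) (I : Finset (Fin n)) (i : Fin n) :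
    ExtSp n d I →ₗ[ℝ] ℝ :=
  (corootForm (R.α i)).comp (LinearMap.fst ℝ _ _) -
    (if h : i ∈ I then
      (LinearMap.proj (R := ℝ) (φ := fun _ : {p : Fin n // p ∈ I} => ℝ) ⟨i, h⟩).comp
        (LinearMap.snd ℝ _ _)
    else 0)

namespace RootSystemBase

variable (R : RootSystemBase n d)

lemma extForm_apply (I : Finset (Fin n)) (i : Fin n) (x : ExtSp n d I) :
    extForm R I i x = corootForm (R.α i) x.1 - (if h : i ∈ I then x.2 ⟨i, h⟩ else 0) := by
  by_cases h : i ∈ I <;> simp [extForm, h]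

lemma extForm_alpha (I : Finset (Fin n)) (i : Fin n) :
    extForm R I i ((R.α i, 0) : ExtSp n d I) = 2 := by
  rw [R.extForm_apply]
  simp [R.corootForm_alpha_self i]

/-- The simple reflection `s_i : x ↦ x − ⟨x, α_i^∨⟩ α_i` on the extended space `E'`. -/
def extRefl (I : Finset (Fin n)) (i : Fin n) : ExtSp n d I ≃ₗ[ℝ] ExtSp n d I :=
  Module.reflection (R.extForm_alpha I i)

/-- The extended pairing `⟨x, α_i^∨⟩` for `x ∈ E'`. -/
def extPair (I : Finset (Fin n)) (x : ExtSp n d I) (i : Fin n) : ℝ := extForm R I i x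

/-- The action of `s_{i_t} ⋯ s_{i_1}` on the extended space `E'`. -/
def extSeqProd (I : Finset (Fin n)) (l : List (Fin n)) : ExtSp n d I ≃ₗ[ℝ] ExtSp n d I :=
  (l.reverse.map (R.extRefl I)).prod

end RootSystemBase

/-!
Let `ω = ∑_{i ∈ I} ω_i` and encode a configuration `c` by the vector `∑_v c_v α_v - ω`. Its
pairing with `α_v^∨` is `2 c_v - (∑_{u ≠ v} (-a_{uv}) c_u + [v ∈ I])`, so `v` is sad exactly when
this pairing is negative, and firing `v` is the simple reflection `s_v`. A play from the zero
configuration thus walks through the Weyl orbit of `-ω`, and it stops exactly at a dominant vector.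

* Termination: with `⟪α_v, ζ⟫ = 1` for all `v`, every firing raises `⟪z, ζ⟫` by at least one,
  while `⟪z, ζ⟫ ≤ ‖ω‖ ‖ζ‖` on the orbit.
* Uniqueness: a Weyl orbit contains only one dominant vector (induction on the length of a word,
  using the deletion property).
* Chip count: `∑_{γ ∈ Φ} |⟨x, γ^∨⟩|` is Weyl invariant, and for dominant `x` it equals
  `2 ⟨x, 2ρ^∨⟩`. Comparing the final vector `z` with `ω` gives `⟨z, 2ρ^∨⟩ = ⟨ω, 2ρ^∨⟩`, and
  since `⟨α_v, 2ρ^∨⟩ = 2` this says `∑ c_v = ⟨ω, 2ρ^∨⟩ = ∑_{γ > 0} ⟨ω, γ^∨⟩`. Each positive root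
  is Weyl-conjugate to a simple root, so `γ^∨` is an integral combination of simple coroots, and
  `⟨ω, γ^∨⟩` is its `I`-height; it vanishes when `γ^∨` lies in the span of the other simple
  coroots.
-/

local notation "E" => EuclideanSpace ℝ (Fin d)

lemma rsPair_eq_inner_rsCoroot (x γ : E) : rsPair x γ = ⟪x, rsCoroot γ⟫ := by
  rw [rsPair, rsCoroot, real_inner_smul_right]
  ring

lemma rsPair_neg_left (x γ : E) : rsPair (-x) γ = -rsPair x γ := map_neg (corootForm γ) x

lemma rsPair_neg_right (x γ : E) : rsPair x (-γ) = -rsPair x γ := by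
  simp only [rsPair, inner_neg_right, inner_neg_left, neg_neg]
  ring

lemma rsPair_self {γ : E} (hγ : γ ≠ 0) : rsPair γ γ = 2 := by
  rw [rsPair, mul_div_assoc, div_self (inner_self_ne_zero.mpr hγ), mul_one]

lemma rsPair_nonneg_iff {x γ : E} (hγ : γ ≠ 0) : 0 ≤ rsPair x γ ↔ 0 ≤ ⟪x, γ⟫ := by
  rw [rsPair, le_div_iff₀ (real_inner_self_pos.mpr hγ), zero_mul,
    mul_nonneg_iff_of_pos_left two_pos]

lemma rsPair_rsCoroot_smul (γ δ : E) : rsPair (rsCoroot δ) γ • γ = rsPair γ δ • rsCoroot γ := by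
  simp only [rsPair, rsCoroot, real_inner_smul_left, smul_smul, real_inner_comm γ δ]
  congr 1
  ring

lemma sum_intCast_single_smul {M : Type*} [AddCommGroup M] [Module ℝ M] (f : Fin n → M)
    (v : Fin n) (k : ℤ) : ∑ i, ((Pi.single v k : Fin n → ℤ) i : ℝ) • f i = (k : ℝ) • f v := by
  rw [Finset.sum_eq_single v (fun i _ hi => by simp [hi]) (by simp)]
  simp

lemma sum_intCast_sub_single_smul {M : Type*} [AddCommGroup M] [Module ℝ M] (f : Fin n → M)
    (c : Fin n → ℤ) (v : Fin n) (k : ℤ) :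
    ∑ i, ((c - Pi.single v k : Fin n → ℤ) i : ℝ) • f i = ∑ i, (c i : ℝ) • f i - (k : ℝ) • f v := by
  simp only [Pi.sub_apply, Int.cast_sub, sub_smul, Finset.sum_sub_distrib,
    sum_intCast_single_smul]

lemma corootForm_apply (γ x : E) : corootForm γ x = rsPair x γ := rfl

namespace RootSystemBase

variable (R : RootSystemBase n d)

lemma sRefl_apply (v : Fin n) (x : E) : R.sRefl v x = x - rsPair x (R.α v) • R.α v :=
  Module.reflection_apply x _

@[simp]
lemma sRefl_sRefl (v : Fin n) (x : E) : R.sRefl v (R.sRefl v x) = x :=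
  Module.involutive_reflection _ x

lemma sRefl_alpha (v : Fin n) : R.sRefl v (R.α v) = -R.α v := by
  rw [sRefl_apply, rsPair_self (R.alpha_ne_zero v), two_smul, sub_add_cancel_left]

lemma inner_sRefl (v : Fin n) (x y : E) : ⟪R.sRefl v x, R.sRefl v y⟫ = ⟪x, y⟫ := by
  have h := R.inner_alpha_ne_zero v
  simp only [sRefl_apply, rsPair, inner_sub_left, inner_sub_right, real_inner_smul_left,
    real_inner_smul_right, real_inner_comm (R.α v) y]
  field_simp
  ring

lemma sRefl_mem {β : E} (hβ : β ∈ R.Φ) (v : Fin n) : R.sRefl v β ∈ R.Φ := by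
  rw [sRefl_apply]
  exact R.reflClosed β hβ _ (R.α_mem v)

lemma neg_mem {β : E} (hβ : β ∈ R.Φ) : -β ∈ R.Φ := by
  simpa [rsPair_self (R.nonzero β hβ), two_smul] using R.reflClosed β hβ β hβ

lemma wordProd_nil : R.wordProd [] = 1 := rfl

lemma wordProd_cons (i : Fin n) (l : List (Fin n)) :
    R.wordProd (i :: l) = R.sRefl i * R.wordProd l := by
  simp [wordProd]

lemma wordProd_append (l₁ l₂ : List (Fin n)) :
    R.wordProd (l₁ ++ l₂) = R.wordProd l₁ * R.wordProd l₂ := by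
  simp [wordProd]

@[simp]
lemma wordProd_wordProd_reverse (l : List (Fin n)) (x : E) :
    R.wordProd l (R.wordProd l.reverse x) = x := by
  induction l generalizing x with
  | nil => rfl
  | cons i l ih =>
    simp [wordProd_cons, wordProd_append, wordProd_nil, LinearEquiv.mul_apply, ih]

lemma inner_wordProd (l : List (Fin n)) (x y : E) :
    ⟪R.wordProd l x, R.wordProd l y⟫ = ⟪x, y⟫ := by
  induction l with
  | nil => rfl
  | cons i l ih => rw [wordProd_cons, LinearEquiv.mul_apply, LinearEquiv.mul_apply, inner_sRefl, ih]

lemma norm_wordProd (l : List (Fin n)) (x : E) : ‖R.wordProd l x‖ = ‖x‖ := by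
  rw [← sq_eq_sq₀ (norm_nonneg _) (norm_nonneg _), ← real_inner_self_eq_norm_sq,
    ← real_inner_self_eq_norm_sq, inner_wordProd]

lemma rsPair_wordProd (l : List (Fin n)) (x y : E) :
    rsPair (R.wordProd l x) (R.wordProd l y) = rsPair x y := by
  simp only [rsPair, inner_wordProd]

lemma rsCoroot_wordProd (l : List (Fin n)) (γ : E) :
    rsCoroot (R.wordProd l γ) = R.wordProd l (rsCoroot γ) := by
  rw [rsCoroot, rsCoroot, inner_wordProd, map_smul]

lemma wordProd_mem {β : E} (hβ : β ∈ R.Φ) (l : List (Fin n)) : R.wordProd l β ∈ R.Φ := by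
  induction l with
  | nil => exact hβ
  | cons i l ih => rw [wordProd_cons, LinearEquiv.mul_apply]; exact R.sRefl_mem ih i

lemma sum_smul_alpha_injective :
    Function.Injective fun c : Fin n → ℤ => ∑ i, (c i : ℝ) • R.α i := by
  intro a b h
  have := linearIndependent_iff_injective_fintypeLinearCombination.mp R.indep
    (a₁ := fun i => (a i : ℝ)) (a₂ := fun i => (b i : ℝ))
    (by simpa [Fintype.linearCombination_apply] using h)
  funext i
  exact_mod_cast congrFun this i

lemma mem_posRoots {β : E} : β ∈ R.posRoots ↔
    β ∈ R.Φ ∧ ∃ c : Fin n → ℤ, β = ∑ i, (c i : ℝ) • R.α i ∧ ∀ i, 0 ≤ c i :=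
  Finset.mem_filter

lemma mem_posRoots_of_coeff_pos {β : E} (hβ : β ∈ R.Φ) {c : Fin n → ℤ}
    (hc : β = ∑ i, (c i : ℝ) • R.α i) {u : Fin n} (hu : 0 < c u) : β ∈ R.posRoots := by
  obtain ⟨e, he, hsign⟩ := R.base β hβ
  obtain rfl : e = c := R.sum_smul_alpha_injective (he.symm.trans hc)
  exact R.mem_posRoots.mpr ⟨hβ, e, he, hsign.resolve_right fun h => (h u).not_gt hu⟩

lemma coeff_nonneg_of_mem_posRoots {β : E} (hβ : β ∈ R.posRoots) {c : Fin n → ℤ}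
    (hc : β = ∑ i, (c i : ℝ) • R.α i) (i : Fin n) : 0 ≤ c i := by
  obtain ⟨-, e, he, hnn⟩ := R.mem_posRoots.mp hβ
  obtain rfl : e = c := R.sum_smul_alpha_injective (he.symm.trans hc)
  exact hnn i

lemma alpha_mem_posRoots (v : Fin n) : R.α v ∈ R.posRoots :=
  R.mem_posRoots_of_coeff_pos (R.α_mem v) (c := Pi.single v 1) (u := v)
    (by rw [sum_intCast_single_smul]; simp) (by simp)

lemma mem_posRoots_or_neg_mem {β : E} (hβ : β ∈ R.Φ) : β ∈ R.posRoots ∨ -β ∈ R.posRoots := by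
  obtain ⟨c, hc, hnn | hnp⟩ := R.base β hβ
  · exact .inl (R.mem_posRoots.mpr ⟨hβ, c, hc, hnn⟩)
  · refine .inr (R.mem_posRoots.mpr ⟨R.neg_mem hβ, -c, ?_, fun i => neg_nonneg.mpr (hnp i)⟩)
    simp [hc, ← Finset.sum_neg_distrib]

lemma neg_not_mem_posRoots {β : E} (hβ : β ∈ R.posRoots) : -β ∉ R.posRoots := by
  intro hneg
  obtain ⟨hΦ, c, hc, hnn⟩ := R.mem_posRoots.mp hβ
  have hc' : -β = ∑ i, ((-c) i : ℝ) • R.α i := by simp [hc, ← Finset.sum_neg_distrib]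
  have hc0 : c = 0 := funext fun i => le_antisymm
    (by simpa using R.coeff_nonneg_of_mem_posRoots hneg hc' i) (hnn i)
  exact R.nonzero β hΦ (by simp [hc, hc0])

lemma sRefl_mem_posRoots {γ : E} (hγ : γ ∈ R.posRoots) {v : Fin n} (hne : γ ≠ R.α v) :
    R.sRefl v γ ∈ R.posRoots := by
  obtain ⟨hΦ, c, hc, hnn⟩ := R.mem_posRoots.mp hγ
  obtain ⟨k, hk⟩ := R.crystallographic γ hΦ _ (R.α_mem v)
  have hs : R.sRefl v γ = ∑ i, ((c - Pi.single v k : Fin n → ℤ) i : ℝ) • R.α i := by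
    rw [sum_intCast_sub_single_smul, sRefl_apply, hk, ← hc]
  by_cases h : ∃ u ≠ v, 0 < c u
  · obtain ⟨u, huv, hu⟩ := h
    exact R.mem_posRoots_of_coeff_pos (R.sRefl_mem hΦ v) hs (u := u) (by simpa [huv] using hu)
  · push Not at h
    have hγv : γ = (c v : ℝ) • R.α v := by
      rw [hc, Finset.sum_eq_single v (fun u _ hu => by simp [le_antisymm (h u hu) (hnn u)])
        (by simp)]
    rcases R.reduced _ (R.α_mem v) _ (hγv ▸ hΦ) with h1 | h1
    · exact absurd (by rw [hγv, h1, one_smul]) hne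
    · have : c v = -1 := by exact_mod_cast h1
      linarith [hnn v]

lemma exists_rsPair_alpha_pos {γ : E} (hγ : γ ∈ R.posRoots) : ∃ i, 0 < rsPair γ (R.α i) := by
  obtain ⟨hΦ, c, hc, hnn⟩ := R.mem_posRoots.mp hγ
  have hsum : ⟪γ, γ⟫ = ∑ i, (c i : ℝ) * ⟪γ, R.α i⟫ := by
    nth_rewrite 2 [hc]
    simp [inner_sum, real_inner_smul_right]
  obtain ⟨i, -, hi⟩ := Finset.exists_lt_of_sum_lt (f := 0) (s := Finset.univ)
    (g := fun i => (c i : ℝ) * ⟪γ, R.α i⟫)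
    (by simpa [← hsum] using real_inner_self_pos.mpr (R.nonzero γ hΦ))
  have := pos_of_mul_pos_right hi (by exact_mod_cast hnn i)
  have := real_inner_self_pos.mpr (R.alpha_ne_zero i)
  exact ⟨i, by unfold rsPair; positivity⟩

lemma exists_wordProd_alpha_eq {γ : E} (hγ : γ ∈ R.posRoots) :
    ∃ (l : List (Fin n)) (i : Fin n), R.wordProd l (R.α i) = γ := by
  obtain ⟨-, c, hc, -⟩ := R.mem_posRoots.mp hγ
  induction hN : (∑ i, c i).toNat using Nat.strong_induction_on generalizing γ c with
  | _ N ih =>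
  obtain ⟨i, hi⟩ := R.exists_rsPair_alpha_pos hγ
  by_cases hγi : γ = R.α i
  · exact ⟨[], i, hγi.symm⟩
  obtain ⟨k, hk⟩ := R.crystallographic γ (R.mem_posRoots.mp hγ).1 _ (R.α_mem i)
  have hk1 : 0 < k := by exact_mod_cast hk ▸ hi
  have hδ := R.sRefl_mem_posRoots hγ hγi
  have hδc : R.sRefl i γ = ∑ u, ((c - Pi.single i k : Fin n → ℤ) u : ℝ) • R.α u := by
    rw [sum_intCast_sub_single_smul, sRefl_apply, hk, hc]
  have hsum : ∑ u, (c - Pi.single i k : Fin n → ℤ) u = ∑ u, c u - k := by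
    simp [Finset.sum_sub_distrib]
  have hδnn := Finset.sum_nonneg fun u (_ : u ∈ Finset.univ) =>
    R.coeff_nonneg_of_mem_posRoots hδ hδc u
  obtain ⟨l, u, hl⟩ := ih _ (by omega) hδ _ hδc rfl
  exact ⟨i :: l, u, by rw [wordProd_cons, LinearEquiv.mul_apply, hl, sRefl_sRefl]⟩

def IsDominant (x : E) : Prop := ∀ v, 0 ≤ rsPair x (R.α v)

variable {R} in
lemma IsDominant.rsPair_nonneg {x : E} (hx : R.IsDominant x) {γ : E} (hγ : γ ∈ R.posRoots) :
    0 ≤ rsPair x γ := by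
  obtain ⟨hΦ, c, hc, hnn⟩ := R.mem_posRoots.mp hγ
  rw [rsPair_nonneg_iff (R.nonzero γ hΦ), hc, inner_sum]
  refine Finset.sum_nonneg fun i _ => ?_
  rw [real_inner_smul_right]
  exact mul_nonneg (by exact_mod_cast hnn i) ((rsPair_nonneg_iff (R.alpha_ne_zero i)).mp (hx i))

lemma sRefl_mul_self (v : Fin n) : R.sRefl v * R.sRefl v = 1 := by
  ext x
  simp [LinearEquiv.mul_apply]

lemma wordProd_mul_sRefl_of_apply_alpha {M : List (Fin n)} {v q : Fin n}
    (h : R.wordProd M (R.α v) = R.α q) :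
    R.wordProd M * R.sRefl v = R.sRefl q * R.wordProd M := by
  ext x
  simp only [LinearEquiv.mul_apply, sRefl_apply, map_sub, map_smul, h]
  rw [← h, rsPair_wordProd]

lemma exists_wordProd_eq_mul_sRefl (M : List (Fin n)) {v : Fin n}
    (h : -R.wordProd M (R.α v) ∈ R.posRoots) :
    ∃ M' : List (Fin n), M'.length + 1 = M.length ∧ R.wordProd M' = R.wordProd M * R.sRefl v := by
  induction M with
  | nil => exact absurd h (R.neg_not_mem_posRoots (R.alpha_mem_posRoots v))
  | cons i M ih =>
    rcases R.mem_posRoots_or_neg_mem (R.wordProd_mem (R.α_mem v) M) with hpos | hneg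
    · have heq : R.wordProd M (R.α v) = R.α i := by
        by_contra hne
        exact R.neg_not_mem_posRoots (R.sRefl_mem_posRoots hpos hne)
          (by simpa [wordProd_cons, LinearEquiv.mul_apply] using h)
      refine ⟨M, by simp, ?_⟩
      rw [wordProd_cons, mul_assoc, R.wordProd_mul_sRefl_of_apply_alpha heq, ← mul_assoc,
        sRefl_mul_self, one_mul]
    · obtain ⟨M', hlen, hM'⟩ := ih hneg
      exact ⟨i :: M', by simp [hlen], by rw [wordProd_cons, wordProd_cons, hM', mul_assoc]⟩

lemma wordProd_apply_eq_self_of_isDominant {x : E} (hx : R.IsDominant x) (l : List (Fin n))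
    (hl : R.IsDominant (R.wordProd l x)) : R.wordProd l x = x := by
  induction hN : l.length using Nat.strong_induction_on generalizing l with
  | _ N ih =>
  rcases l.eq_nil_or_concat' with rfl | ⟨M, v, rfl⟩
  · rfl
  have hM : M.length < N := by
    simp only [List.length_append, List.length_cons, List.length_nil, zero_add] at hN
    omega
  have hw : R.wordProd (M ++ [v]) = R.wordProd M * R.sRefl v := by
    simp [wordProd]
  rcases R.mem_posRoots_or_neg_mem (R.wordProd_mem (R.α_mem v) (M ++ [v])) with hpos | hneg
  · have : -R.wordProd M (R.α v) ∈ R.posRoots := by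
      simpa [hw, LinearEquiv.mul_apply, sRefl_alpha] using hpos
    obtain ⟨M', hlen, hM'⟩ := R.exists_wordProd_eq_mul_sRefl M this
    rw [hw, ← hM'] at hl ⊢
    exact ih _ (by omega) M' hl rfl
  · -- `hx` and `hl` force `⟨x, α_v^∨⟩ = 0`, so `s_v` fixes `x`
    have h0 : rsPair x (R.α v) = 0 := by
      refine le_antisymm ?_ (hx v)
      have := hl.rsPair_nonneg hneg
      rw [rsPair_neg_right, rsPair_wordProd] at this
      linarith
    have hfix : R.sRefl v x = x := by rw [sRefl_apply, h0, zero_smul, sub_zero]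
    rw [hw, LinearEquiv.mul_apply, hfix] at hl ⊢
    exact ih _ hM M hl rfl

lemma rsPair_sRefl_right (v : Fin n) (x y : E) :
    rsPair x (R.sRefl v y) = rsPair (R.sRefl v x) y := by
  simp only [rsPair, ← R.inner_sRefl v x, sRefl_sRefl, inner_sRefl]

lemma sum_sRefl_comp {M : Type*} [AddCommMonoid M] {s : Finset E} (v : Fin n)
    (hs : ∀ γ ∈ s, R.sRefl v γ ∈ s) (f : E → M) :
    ∑ γ ∈ s, f (R.sRefl v γ) = ∑ γ ∈ s, f γ :=
  Finset.sum_nbij' (R.sRefl v) (R.sRefl v) hs hs (by simp) (by simp) fun _ _ => rfl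

lemma posRoots_subset : R.posRoots ⊆ R.Φ := Finset.filter_subset _ _

lemma sum_roots_eq {M : Type*} [AddCommMonoid M] (f : E → M) :
    ∑ γ ∈ R.Φ, f γ = ∑ γ ∈ R.posRoots, (f γ + f (-γ)) := by
  rw [Finset.sum_add_distrib, ← Finset.sum_filter_add_sum_filter_not R.Φ (· ∈ R.posRoots)]
  congr 1
  · rw [Finset.filter_mem_eq_inter, Finset.inter_eq_right.mpr R.posRoots_subset]
  · refine Finset.sum_nbij' (-·) (-·) (fun γ hγ => ?_) (fun γ hγ => ?_) (by simp) (by simp)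
      (by simp)
    · obtain ⟨hΦ, hpos⟩ := Finset.mem_filter.mp hγ
      exact (R.mem_posRoots_or_neg_mem hΦ).resolve_left hpos
    · exact Finset.mem_filter.mpr ⟨R.neg_mem (R.mem_posRoots.mp hγ).1, R.neg_not_mem_posRoots hγ⟩

/-- `x ↦ ⟨x, 2ρ^∨⟩`, where `2ρ^∨ = ∑_{γ > 0} γ^∨`. -/
def rhoForm : E →ₗ[ℝ] ℝ := ∑ γ ∈ R.posRoots, corootForm γ

lemma rhoForm_apply (x : E) : R.rhoForm x = ∑ γ ∈ R.posRoots, rsPair x γ := by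
  simp only [rhoForm, LinearMap.sum_apply]
  rfl

lemma rhoForm_alpha (v : Fin n) : R.rhoForm (R.α v) = 2 := by
  rw [rhoForm_apply, ← Finset.add_sum_erase _ _ (R.alpha_mem_posRoots v),
    rsPair_self (R.alpha_ne_zero v), add_eq_left]
  have hmaps : ∀ γ ∈ R.posRoots.erase (R.α v), R.sRefl v γ ∈ R.posRoots.erase (R.α v) := by
    intro γ hγ
    obtain ⟨hne, hγ⟩ := Finset.mem_erase.mp hγ
    refine Finset.mem_erase.mpr ⟨fun h => ?_, R.sRefl_mem_posRoots hγ hne⟩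
    have : γ = -R.α v := by rw [← R.sRefl_sRefl v γ, h, sRefl_alpha]
    exact R.neg_not_mem_posRoots (R.alpha_mem_posRoots v) (this ▸ hγ)
  -- `s_v` permutes the other positive roots and negates `⟨α_v, ·⟩`
  have := R.sum_sRefl_comp v hmaps (rsPair (R.α v))
  simp only [rsPair_sRefl_right, sRefl_alpha, rsPair_neg_left, Finset.sum_neg_distrib] at this
  linarith

lemma sum_abs_rsPair_wordProd (l : List (Fin n)) (x : E) :
    ∑ γ ∈ R.Φ, |rsPair (R.wordProd l x) γ| = ∑ γ ∈ R.Φ, |rsPair x γ| := by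
  induction l with
  | nil => rfl
  | cons i l ih =>
    rw [wordProd_cons, LinearEquiv.mul_apply, ← ih]
    simp_rw [← rsPair_sRefl_right]
    exact R.sum_sRefl_comp i (fun γ hγ => R.sRefl_mem hγ i) fun γ => |rsPair (R.wordProd l x) γ|

variable {R} in
lemma IsDominant.sum_abs_rsPair {x : E} (hx : R.IsDominant x) :
    ∑ γ ∈ R.Φ, |rsPair x γ| = 2 * R.rhoForm x := by
  rw [sum_roots_eq, rhoForm_apply, Finset.mul_sum]
  refine Finset.sum_congr rfl fun γ hγ => ?_
  rw [rsPair_neg_right, abs_neg, abs_of_nonneg (hx.rsPair_nonneg hγ)]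
  ring

lemma rhoForm_wordProd_neg_of_isDominant {x : E} (hx : R.IsDominant x) (l : List (Fin n))
    (hl : R.IsDominant (R.wordProd l (-x))) : R.rhoForm (R.wordProd l (-x)) = R.rhoForm x := by
  have h := hl.sum_abs_rsPair
  simp only [sum_abs_rsPair_wordProd, rsPair_neg_left, abs_neg, hx.sum_abs_rsPair] at h
  linarith

lemma cartan_real (u v : Fin n) : (R.cartan u v : ℝ) = rsPair (R.α u) (R.α v) := by
  obtain ⟨k, hk⟩ := R.crystallographic _ (R.α_mem u) _ (R.α_mem v)
  rw [cartan, hk, Int.floor_intCast]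

lemma cartan_self (v : Fin n) : R.cartan v v = 2 := by
  exact_mod_cast (R.cartan_real v v).trans (rsPair_self (R.alpha_ne_zero v))

def corootLattice : Submodule ℤ E := Submodule.span ℤ (Set.range fun i => rsCoroot (R.α i))

lemma mem_corootLattice_iff {x : E} :
    x ∈ R.corootLattice ↔ ∃ k : Fin n → ℤ, x = ∑ i, (k i : ℝ) • rsCoroot (R.α i) := by
  simp [corootLattice, Submodule.mem_span_range_iff_exists_fun, Int.cast_smul_eq_zsmul, eq_comm]

lemma sRefl_mem_corootLattice {x : E} (hx : x ∈ R.corootLattice) (v : Fin n) :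
    R.sRefl v x ∈ R.corootLattice := by
  suffices R.corootLattice ≤
      R.corootLattice.comap (((R.sRefl v : E →ₗ[ℝ] E)).restrictScalars ℤ) from this hx
  rw [corootLattice, Submodule.span_le]
  rintro _ ⟨u, rfl⟩
  have h : R.sRefl v (rsCoroot (R.α u)) = rsCoroot (R.α u) - R.cartan v u • rsCoroot (R.α v) := by
    rw [sRefl_apply, rsPair_rsCoroot_smul, ← cartan_real, Int.cast_smul_eq_zsmul]
  simp only [SetLike.mem_coe, Submodule.mem_comap, LinearMap.restrictScalars_apply,
    LinearEquiv.coe_coe, h]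
  exact sub_mem (Submodule.subset_span (Set.mem_range_self u))
    (zsmul_mem (Submodule.subset_span (Set.mem_range_self v)) _)

lemma wordProd_mem_corootLattice {x : E} (hx : x ∈ R.corootLattice) (l : List (Fin n)) :
    R.wordProd l x ∈ R.corootLattice := by
  induction l with
  | nil => exact hx
  | cons i l ih => rw [wordProd_cons, LinearEquiv.mul_apply]; exact R.sRefl_mem_corootLattice ih i

lemma rsCoroot_mem_corootLattice {γ : E} (hγ : γ ∈ R.posRoots) : rsCoroot γ ∈ R.corootLattice := by
  obtain ⟨l, i, rfl⟩ := R.exists_wordProd_alpha_eq hγ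
  rw [rsCoroot_wordProd]
  exact R.wordProd_mem_corootLattice (Submodule.subset_span ⟨i, rfl⟩) l

lemma eq_sum_corootCoeffs {x : E} (hx : x ∈ R.corootLattice) :
    x = ∑ i, (R.corootCoeffs x i : ℝ) • rsCoroot (R.α i) := by
  have h := R.mem_corootLattice_iff.mp hx
  rw [corootCoeffs, dif_pos h]
  exact h.choose_spec

lemma exists_inner_alpha_eq (t : Fin n → ℝ) : ∃ y : E, ∀ v, ⟪R.α v, y⟫ = t v := by
  let T : (Fin n → ℝ) →ₗ[ℝ] Fin n → ℝ :=
    LinearMap.pi (fun v => innerₗ E (R.α v)) ∘ₗ Fintype.linearCombination ℝ R.α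
  have hT : Function.Injective T := by
    rw [← LinearMap.ker_eq_bot, LinearMap.ker_eq_bot']
    intro c hc
    have hy : ∀ v, ⟪R.α v, Fintype.linearCombination ℝ R.α c⟫ = 0 := fun v => congrFun hc v
    have h0 : Fintype.linearCombination ℝ R.α c = 0 := by
      rw [← inner_self_eq_zero (𝕜 := ℝ)]
      nth_rewrite 1 [Fintype.linearCombination_apply]
      simp only [sum_inner, real_inner_smul_left, hy, mul_zero, Finset.sum_const_zero]
    exact linearIndependent_iff_injective_fintypeLinearCombination.mp R.indep
      (h0.trans (map_zero _).symm)
  obtain ⟨c, hc⟩ := LinearMap.injective_iff_surjective.mp hT t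
  exact ⟨Fintype.linearCombination ℝ R.α c, fun v => congrFun hc v⟩

/-- `ω` is the sum of the fundamental weights `ω_i`, `i ∈ I`. -/
def IsFundWeight (I : Finset (Fin n)) (ω : E) : Prop :=
  ∀ v, rsPair ω (R.α v) = if v ∈ I then 1 else 0

lemma exists_isFundWeight (I : Finset (Fin n)) : ∃ ω, R.IsFundWeight I ω := by
  obtain ⟨ω, hω⟩ := R.exists_inner_alpha_eq fun v => if v ∈ I then ⟪R.α v, R.α v⟫ / 2 else 0
  refine ⟨ω, fun v => ?_⟩
  rw [rsPair, real_inner_comm, hω v]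
  split_ifs
  · rw [mul_div_cancel₀ _ two_ne_zero, div_self (R.inner_alpha_ne_zero v)]
  · simp

def configVec (ω : E) (c : Fin n → ℤ) : E := ∑ v, (c v : ℝ) • R.α v - ω

section FundWeight

variable {R} {I : Finset (Fin n)} {ω : EuclideanSpace ℝ (Fin d)}

lemma IsFundWeight.isDominant (hω : R.IsFundWeight I ω) : R.IsDominant ω := fun v => by
  rw [hω v]
  split_ifs <;> norm_num

lemma IsFundWeight.inner_eq_htI {x : E} (hω : R.IsFundWeight I ω)
    (hx : x ∈ R.corootLattice) : ⟪ω, x⟫ = R.htI I x := by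
  have hω' : ∀ v, rsPair ω (R.α v) = if v ∈ I then 1 else 0 := hω
  conv_lhs => rw [R.eq_sum_corootCoeffs hx]
  simp only [inner_sum, real_inner_smul_right, ← rsPair_eq_inner_rsCoroot, hω', mul_ite, mul_one,
    mul_zero, Finset.sum_ite_mem, Finset.univ_inter, htI, Int.cast_sum]

lemma IsFundWeight.rsPair_eq_htI {γ : E} (hω : R.IsFundWeight I ω)
    (hγ : γ ∈ R.posRoots) : rsPair ω γ = R.htI I (rsCoroot γ) := by
  rw [rsPair_eq_inner_rsCoroot, hω.inner_eq_htI (R.rsCoroot_mem_corootLattice hγ)]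

lemma IsFundWeight.rsPair_configVec (hω : R.IsFundWeight I ω) (c : Fin n → ℤ) (v : Fin n) :
    rsPair (R.configVec ω c) (R.α v) = ((2 * c v - R.chipBound I c v : ℤ) : ℝ) := by
  have h : 2 * c v - R.chipBound I c v = ∑ u, R.cartan u v * c u - if v ∈ I then 1 else 0 := by
    rw [chipBound, ← Finset.add_sum_erase _ _ (Finset.mem_univ v), cartan_self]
    simp only [neg_mul, Finset.sum_neg_distrib]
    ring
  rw [h, configVec, ← corootForm_apply, map_sub, map_sum]
  simp only [map_smul, smul_eq_mul, corootForm_apply, ← cartan_real, hω v]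
  push_cast
  simp only [mul_comm]

lemma IsFundWeight.rsPair_configVec_le_of_sad (hω : R.IsFundWeight I ω) {c : Fin n → ℤ}
    {v : Fin n} (h : R.Sad I c v) : rsPair (R.configVec ω c) (R.α v) ≤ -1 := by
  rw [hω.rsPair_configVec]
  exact_mod_cast (by unfold Sad at h; omega : 2 * c v - R.chipBound I c v ≤ -1)

lemma IsFundWeight.rsPair_configVec_nonneg_of_not_sad (hω : R.IsFundWeight I ω)
    {c : Fin n → ℤ} {v : Fin n} (h : ¬R.Sad I c v) : 0 ≤ rsPair (R.configVec ω c) (R.α v) := by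
  rw [hω.rsPair_configVec]
  exact_mod_cast (by unfold Sad at h; omega : 0 ≤ 2 * c v - R.chipBound I c v)

lemma IsFundWeight.configVec_fire (hω : R.IsFundWeight I ω) (c : Fin n → ℤ) (v : Fin n) :
    R.configVec ω (R.fire I c v) = R.sRefl v (R.configVec ω c) := by
  have hfire : R.fire I c v = c - Pi.single v (2 * c v - R.chipBound I c v) := by
    ext u
    by_cases h : u = v
    · subst h
      simp only [fire, Function.update_self, Pi.sub_apply, Pi.single_eq_same]
      ring
    · simp [fire, h]
  rw [hfire, configVec, sum_intCast_sub_single_smul, sRefl_apply, hω.rsPair_configVec, configVec]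
  abel

lemma IsFundWeight.configVec_foldl (hω : R.IsFundWeight I ω) (l : List (Fin n))
    (c : Fin n → ℤ) :
    R.configVec ω (l.foldl (R.fire I) c) = R.wordProd l.reverse (R.configVec ω c) := by
  induction l generalizing c with
  | nil => rfl
  | cons v l ih =>
    simp [ih, hω.configVec_fire, LinearEquiv.mul_apply, wordProd]

lemma configVec_zero : R.configVec ω 0 = -ω := by
  simp [configVec]

lemma IsFundWeight.configVec_play (hω : R.IsFundWeight I ω) (l : List (Fin n)) :
    R.configVec ω (R.play I l) = R.wordProd l.reverse (-ω) := by
  rw [play, hω.configVec_foldl, configVec_zero]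

lemma IsFundWeight.isDominant_configVec_play (hω : R.IsFundWeight I ω) {l : List (Fin n)}
    (hl : R.MaximalSeq I l) : R.IsDominant (R.configVec ω (R.play I l)) := fun v =>
  hω.rsPair_configVec_nonneg_of_not_sad (hl.2 v)

lemma IsFundWeight.inner_configVec_add_length_le (hω : R.IsFundWeight I ω)
    {ζ : EuclideanSpace ℝ (Fin d)} (hζ : ∀ v, ⟪R.α v, ζ⟫ = 1) {c : Fin n → ℤ}
    {l : List (Fin n)} (hl : R.ValidFrom I c l) :
    ⟪R.configVec ω c, ζ⟫ + l.length ≤ ⟪R.configVec ω (l.foldl (R.fire I) c), ζ⟫ := by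
  induction l generalizing c with
  | nil => simp
  | cons v l ih =>
    obtain ⟨hsad, hl⟩ := hl
    have hstep : ⟪R.configVec ω c, ζ⟫ + 1 ≤ ⟪R.configVec ω (R.fire I c v), ζ⟫ := by
      rw [hω.configVec_fire, sRefl_apply, inner_sub_left, real_inner_smul_left, hζ]
      linarith [hω.rsPair_configVec_le_of_sad hsad]
    have := ih hl
    simp only [List.foldl_cons, List.length_cons]
    push_cast
    linarith

end FundWeight

lemma validFrom_append {I : Finset (Fin n)} (c : Fin n → ℤ) (l : List (Fin n)) (v : Fin n) :
    R.ValidFrom I c (l ++ [v]) ↔ R.ValidFrom I c l ∧ R.Sad I (l.foldl (R.fire I) c) v := by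
  induction l generalizing c with
  | nil => simp [ValidFrom]
  | cons u l ih => simp [ValidFrom, ih, and_assoc]

lemma exists_length_bound (I : Finset (Fin n)) : ∃ N : ℕ, ∀ l, R.Valid I l → l.length ≤ N := by
  obtain ⟨ω, hω⟩ := R.exists_isFundWeight I
  obtain ⟨ζ, hζ⟩ := R.exists_inner_alpha_eq fun _ => 1
  refine ⟨⌈‖ω‖ * ‖ζ‖ + ⟪ω, ζ⟫⌉₊, fun l hl => ?_⟩
  have hpot := hω.inner_configVec_add_length_le hζ hl
  rw [← play, hω.configVec_play, configVec_zero, inner_neg_left] at hpot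
  have hnorm := real_inner_le_norm (R.wordProd l.reverse (-ω)) ζ
  rw [norm_wordProd, norm_neg] at hnorm
  have : (l.length : ℝ) ≤ ‖ω‖ * ‖ζ‖ + ⟪ω, ζ⟫ := by linarith
  exact_mod_cast this.trans (Nat.le_ceil _)

lemma exists_maximalSeq (I : Finset (Fin n)) : ∃ l, R.MaximalSeq I l := by
  obtain ⟨N, hN⟩ := R.exists_length_bound I
  by_contra! h
  have hlong : ∀ k, ∃ l, R.Valid I l ∧ l.length = k := by
    intro k
    induction k with
    | zero => exact ⟨[], trivial, rfl⟩
    | succ k ih =>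
      obtain ⟨l, hl, rfl⟩ := ih
      obtain ⟨v, hv⟩ : ∃ v, R.Sad I (R.play I l) v := by simpa [MaximalSeq, hl] using h l
      exact ⟨l ++ [v], (R.validFrom_append 0 l v).mpr ⟨hl, hv⟩, by simp⟩
  obtain ⟨l, hl, hlen⟩ := hlong (N + 1)
  exact absurd (hN l hl) (by omega)

lemma play_eq_of_maximalSeq {I : Finset (Fin n)} {l l' : List (Fin n)} (hl : R.MaximalSeq I l)
    (hl' : R.MaximalSeq I l') : R.play I l = R.play I l' := by
  obtain ⟨ω, hω⟩ := R.exists_isFundWeight I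
  have hrel : R.wordProd (l.reverse ++ l') (R.configVec ω (R.play I l')) =
      R.configVec ω (R.play I l) := by
    rw [hω.configVec_play, hω.configVec_play, wordProd_append, LinearEquiv.mul_apply,
      wordProd_wordProd_reverse]
  have := R.wordProd_apply_eq_self_of_isDominant (hω.isDominant_configVec_play hl') _
    (hrel ▸ hω.isDominant_configVec_play hl)
  rw [hrel, configVec, configVec, sub_left_inj] at this
  exact R.sum_smul_alpha_injective this

lemma sum_play_of_maximalSeq {I : Finset (Fin n)} {l : List (Fin n)} (hl : R.MaximalSeq I l) :
    ∑ v, R.play I l v = ∑ γ ∈ R.posRoots, R.htI I (rsCoroot γ) := by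
  obtain ⟨ω, hω⟩ := R.exists_isFundWeight I
  have hρ := R.rhoForm_wordProd_neg_of_isDominant hω.isDominant l.reverse
    (hω.configVec_play l ▸ hω.isDominant_configVec_play hl)
  rw [← hω.configVec_play, configVec, map_sub, map_sum] at hρ
  simp only [map_smul, rhoForm_alpha, smul_eq_mul] at hρ
  have hω_ht : R.rhoForm ω = ∑ γ ∈ R.posRoots, (R.htI I (rsCoroot γ) : ℝ) := by
    rw [rhoForm_apply]
    exact Finset.sum_congr rfl fun γ hγ => hω.rsPair_eq_htI hγ
  rw [← Finset.sum_mul] at hρ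
  exact_mod_cast (by linarith :
    ∑ v, (R.play I l v : ℝ) = ∑ γ ∈ R.posRoots, (R.htI I (rsCoroot γ) : ℝ))

lemma corootCoeffs_eq_zero_of_mem_span {x : E} (hx : x ∈ R.corootLattice) {j : Fin n}
    (hs : x ∈ Submodule.span ℝ ((fun i => rsCoroot (R.α i)) '' {i : Fin n | i ≠ j})) :
    R.corootCoeffs x j = 0 := by
  obtain ⟨ω, hω⟩ := R.exists_isFundWeight {j}
  have hker : Submodule.span ℝ ((fun i => rsCoroot (R.α i)) '' {i : Fin n | i ≠ j}) ≤
      LinearMap.ker (innerₗ E ω) := by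
    rw [Submodule.span_le]
    rintro _ ⟨i, hi, rfl⟩
    rw [SetLike.mem_coe, LinearMap.mem_ker, innerₗ_apply_apply, ← rsPair_eq_inner_rsCoroot, hω i,
      if_neg (by simpa using hi)]
  have h0 : ⟪ω, x⟫ = 0 := hker hs
  have h := hω.inner_eq_htI hx
  rw [h0, htI, Finset.sum_singleton] at h
  exact_mod_cast h.symm

end RootSystemBase

/-- For a single modified vertex `I = {j}`, the total number of chips of the
unique final configuration equals the sum, over all positive coroots not lying in the coroot
subsystem generated by `{α_i^∨ : i ≠ j}`, of the coefficient of `α_j^∨`. -/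
theorem statement6 {n d : ℕ} (R : RootSystemBase n d) (j : Fin n) :
    (∃ N : ℕ, ∀ l : List (Fin n), R.Valid {j} l → l.length ≤ N) ∧
    ∃ cfin : Fin n → ℤ,
      (∃ l : List (Fin n), R.MaximalSeq {j} l) ∧
      (∀ l : List (Fin n), R.MaximalSeq {j} l → R.play {j} l = cfin) ∧
      ∑ v, cfin v =
        ∑ γ ∈ R.posRoots.filter (fun γ => rsCoroot γ ∉
            Submodule.span ℝ ((fun i => rsCoroot (R.α i)) '' {i : Fin n | i ≠ j})),
          R.corootCoeffs (rsCoroot γ) j := by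
  obtain ⟨l, hl⟩ := R.exists_maximalSeq {j}
  refine ⟨R.exists_length_bound {j}, R.play {j} l, ⟨l, hl⟩,
    fun l' hl' => R.play_eq_of_maximalSeq hl' hl, ?_⟩
  rw [R.sum_play_of_maximalSeq hl, Finset.sum_filter_of_ne]
  · simp [RootSystemBase.htI]
  · intro γ hγ hne hs
    exact hne (R.corootCoeffs_eq_zero_of_mem_span (R.rsCoroot_mem_corootLattice hγ) hs)
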